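/- arXiv:1506.05223 — 2 statements merged into one kernel-verified Lean document; each statement's English description precedes it below -/
import Mathlib

section
/- Let G be a finite abelian group and G₀ ⊆ G non-half-factorial such that there exists an atom U over G₀ with cross number k(U) < 1. Then min Δ(G₀) ≤ exp(G) − 2. -/
/-- A sequence over `G₀` (a multiset with entries in `G₀`) with sum zero. -/
def IsZeroSumSeq {G : Type*} [AddCommGroup G] (G₀ : Set G) (S : Multiset G) : Prop :=
  (∀ g ∈ S, g ∈ G₀) ∧ S.sum = 0

/-- A minimal zero-sum sequence (atom) over `G₀`. -/
def IsAtomSeq {G : Type*} [AddCommGroup G] (G₀ : Set G) (A : Multiset G) : Prop :=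
  IsZeroSumSeq G₀ A ∧ A ≠ 0 ∧ ∀ B ≤ A, B ≠ 0 → B.sum = 0 → B = A

/-- The set of lengths of factorizations of `B` into atoms over `G₀`. -/
def LengthSet {G : Type*} [AddCommGroup G] (G₀ : Set G) (B : Multiset G) : Set ℕ :=
  {k | ∃ F : Multiset (Multiset G), F.card = k ∧ (∀ A ∈ F, IsAtomSeq G₀ A) ∧ F.sum = B}

/-- The set of successive distances of a set of naturals. -/
def DistSet (L : Set ℕ) : Set ℕ :=
  {d | ∃ a b, a ∈ L ∧ b ∈ L ∧ a < b ∧ b - a = d ∧ ∀ c ∈ L, ¬(a < c ∧ c < b)}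

/-- The set of distances `Δ(G₀)`. -/
def DeltaSet {G : Type*} [AddCommGroup G] (G₀ : Set G) : Set ℕ :=
  {d | ∃ B : Multiset G, IsZeroSumSeq G₀ B ∧ d ∈ DistSet (LengthSet G₀ B)}

/-- The cross number of a sequence. -/
noncomputable def crossNum {G : Type*} [AddCommGroup G] (S : Multiset G) : ℚ :=
  (S.map (fun g => (1 : ℚ) / addOrderOf g)).sum

/-- `G₀` is an LCN-set: every atom has cross number at least 1. -/
def IsLCNSet {G : Type*} [AddCommGroup G] (G₀ : Set G) : Prop :=
  ∀ A : Multiset G, IsAtomSeq G₀ A → 1 ≤ crossNum A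

/-- The set of minimal distances `Δ*(G)`. -/
def DeltaStar (G : Type*) [AddCommGroup G] : Set ℕ :=
  {d | ∃ G₀ : Set G, DeltaSet G₀ ≠ ∅ ∧ d = sInf (DeltaSet G₀)}

/-- `m(G)`: the maximum of `min Δ(G₀)` over non-half-factorial LCN-sets `G₀`. -/
noncomputable def mConst (G : Type*) [AddCommGroup G] : ℕ :=
  sSup {d | ∃ G₀ : Set G, IsLCNSet G₀ ∧ DeltaSet G₀ ≠ ∅ ∧ d = sInf (DeltaSet G₀)}

/-- The rank of a finite abelian group: the maximal `k` such that `(ZMod p)^k`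
embeds into `G` for some prime `p`. -/
noncomputable def grank (G : Type*) [AddCommGroup G] : ℕ :=
  sSup {k | ∃ p : ℕ, p.Prime ∧ ∃ f : (Fin k → ZMod p) →+ G, Function.Injective f}

/-- The system of sets of lengths `L(G)`. -/
def SystemSets (G : Type*) [AddCommGroup G] : Set (Set ℕ) :=
  {L | ∃ B : Multiset G, B.sum = 0 ∧ L = LengthSet Set.univ B}

/-- The Davenport constant: the maximal length of a minimal zero-sum sequence. -/
noncomputable def DavenportC (G : Type*) [AddCommGroup G] : ℕ :=
  sSup {k | ∃ A : Multiset G, IsAtomSeq (Set.univ : Set G) A ∧ A.card = k}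


section Aux
variable {G : Type*} [AddCommGroup G]

lemma aux_sum_nsmul (n : ℕ) (s : Multiset G) : (n • s).sum = n • s.sum := by
  induction n with
  | zero => simp
  | succ k ih => simp [succ_nsmul, ih]

lemma aux_map_replicate_sum (n : ℕ) (s : Multiset G) :
    (s.map fun g => Multiset.replicate n g).sum = n • s := by
  induction s using Multiset.induction with
  | empty => simp
  | cons a s ih =>
    rw [Multiset.map_cons, Multiset.sum_cons, ih, ← Multiset.singleton_add, smul_add,
      Multiset.nsmul_singleton]

lemma atom_replicate [Finite G] (G₀ : Set G) {g : G} (hg : g ∈ G₀) :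
    IsAtomSeq G₀ (Multiset.replicate (addOrderOf g) g) := by
  have ho : 0 < addOrderOf g := addOrderOf_pos g
  refine ⟨⟨fun x hx => ?_, ?_⟩, ?_, ?_⟩
  · rwa [Multiset.eq_of_mem_replicate hx]
  · rw [Multiset.sum_replicate, addOrderOf_nsmul_eq_zero]
  · exact Multiset.card_pos.1 (by simp [ho])
  · intro B hB hB0 hBsum
    have hmem : ∀ b ∈ B, b = g := fun b hb =>
      Multiset.eq_of_mem_replicate (Multiset.subset_of_le hB hb)
    have hBrep : B = Multiset.replicate B.card g := Multiset.eq_replicate_card.2 hmem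
    have hsum : B.card • g = 0 := by rw [← Multiset.sum_replicate, ← hBrep, hBsum]
    have hdvd : addOrderOf g ∣ B.card := addOrderOf_dvd_iff_nsmul_eq_zero.2 hsum
    have hle : B.card ≤ addOrderOf g := by
      simpa using Multiset.card_le_card hB
    have hpos : 0 < B.card := Multiset.card_pos.2 hB0
    have : B.card = addOrderOf g := le_antisymm hle (Nat.le_of_dvd hpos hdvd)
    rw [hBrep, this]

end Aux

section Main
variable {G : Type*} [AddCommGroup G]

theorem stmt_7' {G : Type*} [AddCommGroup G] [Fintype G] (G₀ : Set G)
    (hnhf : DeltaSet G₀ ≠ ∅)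
    (hU : ∃ U : Multiset G, IsAtomSeq G₀ U ∧ crossNum U < 1) :
    sInf (DeltaSet G₀) ≤ AddMonoid.exponent G - 2 := by
  classical
  obtain ⟨U, hUatom, hUcross⟩ := hU
  obtain ⟨⟨hUmem, hUsum⟩, hU0, -⟩ := id hUatom
  set n := AddMonoid.exponent G with hn
  have hnpos : 0 < n := Nat.pos_of_ne_zero AddMonoid.exponent_ne_zero_of_finite
  have hord : ∀ g : G, addOrderOf g ∣ n := fun g => AddMonoid.addOrder_dvd_exponent g
  have hordpos : ∀ g : G, 0 < addOrderOf g := fun g => addOrderOf_pos g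
  -- `U` has at least two elements
  have hcard2 : 2 ≤ Multiset.card U := by
    rcases Nat.lt_or_ge (Multiset.card U) 2 with h | h
    · exfalso
      interval_cases hc : Multiset.card U
      · exact hU0 (Multiset.card_eq_zero.1 hc)
      · obtain ⟨a, ha⟩ := Multiset.card_eq_one.1 hc
        have ha0 : a = 0 := by simpa [ha] using hUsum
        rw [ha, ha0] at hUcross
        simp [crossNum] at hUcross
    · exact h
  set m : ℕ := (U.map fun g => n / addOrderOf g).sum with hm
  -- `m` equals `n * crossNum U` as a rational
  have hmcast : (m : ℚ) = n * crossNum U := by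
    rw [hm, Nat.cast_multiset_sum, Multiset.map_map, crossNum, ← Multiset.sum_map_mul_left]
    refine congrArg _ (Multiset.map_congr rfl fun g _ => ?_)
    simp only [Function.comp_apply]
    rw [Nat.cast_div (hord g) (Nat.cast_ne_zero.2 (hordpos g).ne')]
    ring
  have hmn : m < n := by
    have : (m : ℚ) < n := by
      rw [hmcast]
      calc (n : ℚ) * crossNum U < n * 1 := by
            exact mul_lt_mul_of_pos_left hUcross (by exact_mod_cast hnpos)
        _ = n := mul_one _
    exact_mod_cast this
  have hm2 : 2 ≤ m := by
    have h1 : ∀ g ∈ U, 1 ≤ n / addOrderOf g := fun g _ =>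
      (Nat.one_le_div_iff (hordpos g)).2 (Nat.le_of_dvd hnpos (hord g))
    have : ((U.map fun _ => 1).sum : ℕ) ≤ m :=
      Multiset.sum_map_le_sum_map _ _ h1
    simp only [Multiset.map_const', Multiset.sum_replicate, smul_eq_mul, mul_one] at this
    omega
  -- the big zero-sum sequence `B = n • U`
  set B : Multiset G := n • U with hB
  have hBzs : IsZeroSumSeq G₀ B := by
    constructor
    · intro g hg
      exact hUmem g (Multiset.mem_nsmul.1 hg).2
    · rw [hB, aux_sum_nsmul, hUsum, smul_zero]
  -- `n` is a length of `B`
  have hnL : n ∈ LengthSet G₀ B := by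
    refine ⟨Multiset.replicate n U, Multiset.card_replicate _ _, fun A hA => ?_, ?_⟩
    · rw [Multiset.eq_of_mem_replicate hA]; exact hUatom
    · rw [Multiset.sum_replicate, hB]
  -- `m` is a length of `B`
  have hmL : m ∈ LengthSet G₀ B := by
    refine ⟨U.bind fun g => Multiset.replicate (n / addOrderOf g)
      (Multiset.replicate (addOrderOf g) g), ?_, ?_, ?_⟩
    · rw [Multiset.card_bind, hm]
      exact congrArg _ (Multiset.map_congr rfl fun g _ => by
        simp [Function.comp])
    · intro A hA
      obtain ⟨g, hg, hA⟩ := Multiset.mem_bind.1 hA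
      rw [Multiset.eq_of_mem_replicate hA]
      exact atom_replicate G₀ (hUmem g hg)
    · rw [Multiset.sum_bind]
      have : (U.map fun g => (Multiset.replicate (n / addOrderOf g)
          (Multiset.replicate (addOrderOf g) g)).sum)
          = U.map fun g => Multiset.replicate n g := by
        refine Multiset.map_congr rfl fun g _ => ?_
        rw [Multiset.sum_replicate, Multiset.nsmul_replicate,
          Nat.div_mul_cancel (hord g)]
      rw [this, aux_map_replicate_sum]
  -- find a successive distance inside `[m, n]`
  set S : Set ℕ := {k | k ∈ LengthSet G₀ B ∧ m < k} with hS
  have hnS : n ∈ S := ⟨hnL, hmn⟩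
  have hbS : sInf S ∈ S := Nat.sInf_mem ⟨n, hnS⟩
  set b := sInf S with hb
  have hbn : b ≤ n := Nat.sInf_le hnS
  have hdD : b - m ∈ DeltaSet G₀ := by
    refine ⟨B, hBzs, m, b, hmL, hbS.1, hbS.2, rfl, ?_⟩
    rintro c hc ⟨h1, h2⟩
    exact absurd (Nat.sInf_le (⟨hc, h1⟩ : c ∈ S)) (not_le.2 h2)
  calc sInf (DeltaSet G₀) ≤ b - m := Nat.sInf_le hdD
    _ ≤ n - 2 := by omega

end Main

theorem stmt_7 {G : Type*} [AddCommGroup G] [Fintype G] (G₀ : Set G)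
    (hnhf : DeltaSet G₀ ≠ ∅)
    (hU : ∃ U : Multiset G, IsAtomSeq G₀ U ∧ crossNum U < 1) :
    sInf (DeltaSet G₀) ≤ AddMonoid.exponent G - 2 := by
  exact stmt_7' G₀ hnhf hU
end

section
/- Let G be a finite abelian group and G₀ ⊆ G non-half-factorial such that (a) there is g ∈ G₀ with Δ(G₀ \ {g}) = ∅, and (b) there is an atom U over G₀ with k(U) = 1 and gcd(v_g(U), ord(g)) = 1. Then every atom over G₀ has integer cross number, and min Δ(G₀) divides gcd{k(A) − 1 : A an atom over G₀ with k(A) > 1}. -/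
theorem exists_mem_distSet_of_lt {S : Set ℕ} {a b : ℕ} (ha : a ∈ S) (hb : b ∈ S) (hab : a < b) :
    ∃ c ∈ S, a < c ∧ c ≤ b ∧ c - a ∈ DistSet S := by
  set T := {c | c ∈ S ∧ a < c}
  have hbT : b ∈ T := ⟨hb, hab⟩
  obtain ⟨hcS, hac⟩ : sInf T ∈ T := Nat.sInf_mem ⟨b, hbT⟩
  refine ⟨sInf T, hcS, hac, Nat.sInf_le hbT, a, sInf T, ha, hcS, hac, rfl, ?_⟩
  rintro c hc ⟨hac', hcT⟩
  exact (Nat.sInf_le (show c ∈ T from ⟨hc, hac'⟩)).not_gt hcT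

theorem dvd_sub_of_forall_mem_distSet_dvd {S : Set ℕ} {d : ℕ} (h : ∀ e ∈ DistSet S, d ∣ e)
    {a b : ℕ} (ha : a ∈ S) (hb : b ∈ S) : d ∣ b - a := by
  induction hn : b - a using Nat.strong_induction_on generalizing a with
  | _ n ih =>
    rcases le_or_gt b a with hba | hab
    · rw [← hn, Nat.sub_eq_zero_of_le hba]
      exact dvd_zero d
    obtain ⟨c, hc, hac, hcb, hdist⟩ := exists_mem_distSet_of_lt ha hb hab
    rw [← hn, ← Nat.sub_add_sub_cancel hcb hac.le]
    exact dvd_add (ih _ (by omega) hc rfl) (h _ hdist)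

section ZeroSum

variable {G : Type*} [AddCommGroup G] {G₀ : Set G}

theorem IsZeroSumSeq.add {B C : Multiset G} (hB : IsZeroSumSeq G₀ B) (hC : IsZeroSumSeq G₀ C) :
    IsZeroSumSeq G₀ (B + C) := by
  refine ⟨fun x hx => ?_, by rw [Multiset.sum_add, hB.2, hC.2, add_zero]⟩
  rcases Multiset.mem_add.1 hx with h | h
  exacts [hB.1 x h, hC.1 x h]

theorem IsZeroSumSeq.nsmul {C : Multiset G} (hC : IsZeroSumSeq G₀ C) (q : ℕ) :
    IsZeroSumSeq G₀ (q • C) :=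
  ⟨fun x hx => hC.1 x (Multiset.mem_nsmul.1 hx).2,
    show Multiset.sumAddMonoidHom (q • C) = 0 by simp [map_nsmul, hC.2]⟩

theorem IsAtomSeq.mono {G₁ : Set G} {A : Multiset G} (hA : IsAtomSeq G₀ A) (h : G₀ ⊆ G₁) :
    IsAtomSeq G₁ A :=
  ⟨⟨fun x hx => h (hA.1.1 x hx), hA.1.2⟩, hA.2⟩

theorem isAtomSeq_replicate_addOrderOf [Finite G] {x : G} (hx : x ∈ G₀) :
    IsAtomSeq G₀ (Multiset.replicate (addOrderOf x) x) := by
  have hpos : 0 < addOrderOf x := addOrderOf_pos x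
  refine ⟨⟨fun y hy => Multiset.eq_of_mem_replicate hy ▸ hx, ?_⟩, ?_, ?_⟩
  · rw [Multiset.sum_replicate, addOrderOf_nsmul_eq_zero]
  · exact fun h => hpos.ne' (by simpa using congrArg Multiset.card h)
  · intro B hB hB0 hBs
    obtain ⟨m, hm, rfl⟩ := Multiset.le_replicate_iff.1 hB
    have hm0 : m ≠ 0 := by rintro rfl; simp at hB0
    rw [Multiset.sum_replicate] at hBs
    have hdvd := addOrderOf_dvd_of_nsmul_eq_zero hBs
    rw [le_antisymm hm (Nat.le_of_dvd (Nat.pos_of_ne_zero hm0) hdvd)]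

theorem IsZeroSumSeq.exists_isAtomSeq_le {B : Multiset G} (hB : IsZeroSumSeq G₀ B) (hB0 : B ≠ 0) :
    ∃ A, IsAtomSeq G₀ A ∧ A ≤ B := by
  obtain ⟨C, ⟨hCB, hC0, hCs⟩, hmin⟩ :=
    wellFounded_lt.has_min {C : Multiset G | C ≤ B ∧ C ≠ 0 ∧ C.sum = 0} ⟨B, le_rfl, hB0, hB.2⟩
  refine ⟨C, ⟨⟨fun x hx => hB.1 x (Multiset.mem_of_le hCB hx), hCs⟩, hC0, ?_⟩, hCB⟩
  intro D hDC hD0 hDs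
  by_contra hne
  exact hmin D ⟨hDC.trans hCB, hD0, hDs⟩ (lt_of_le_of_ne hDC hne)

end ZeroSum

section Lengths

variable {G : Type*} [AddCommGroup G] {G₀ : Set G}

theorem IsAtomSeq.one_mem_lengthSet {A : Multiset G} (hA : IsAtomSeq G₀ A) :
    1 ∈ LengthSet G₀ A :=
  ⟨{A}, rfl, by simpa using hA, by simp⟩

theorem add_mem_lengthSet {B C : Multiset G} {a b : ℕ}
    (ha : a ∈ LengthSet G₀ B) (hb : b ∈ LengthSet G₀ C) : a + b ∈ LengthSet G₀ (B + C) := by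
  obtain ⟨F, rfl, hF, rfl⟩ := ha
  obtain ⟨E, rfl, hE, rfl⟩ := hb
  refine ⟨F + E, Multiset.card_add F E, fun A hA => ?_, Multiset.sum_add F E⟩
  rcases Multiset.mem_add.1 hA with h | h
  exacts [hF A h, hE A h]

theorem mul_mem_lengthSet_nsmul {C : Multiset G} {a : ℕ} (ha : a ∈ LengthSet G₀ C) (q : ℕ) :
    q * a ∈ LengthSet G₀ (q • C) := by
  induction q with
  | zero => exact ⟨0, by simp, by simp, by simp⟩
  | succ q ih => simpa [succ_nsmul, add_mul] using add_mem_lengthSet ih ha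

theorem lengthSet_mono {G₁ : Set G} (h : G₀ ⊆ G₁) (B : Multiset G) :
    LengthSet G₀ B ⊆ LengthSet G₁ B := by
  rintro k ⟨F, hF, hFa, hFs⟩
  exact ⟨F, hF, fun A hA => (hFa A hA).mono h, hFs⟩

theorem IsZeroSumSeq.lengthSet_nonempty {B : Multiset G} (hB : IsZeroSumSeq G₀ B) :
    (LengthSet G₀ B).Nonempty := by
  classical
  induction B using WellFoundedLT.induction with
  | _ B ih =>
    by_cases hB0 : B = 0
    · exact ⟨0, 0, rfl, by simp, by simp [hB0]⟩
    obtain ⟨A, hA, hAB⟩ := hB.exists_isAtomSeq_le hB0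
    have hBA : B - A + A = B := tsub_add_cancel_of_le hAB
    have hrest : IsZeroSumSeq G₀ (B - A) := by
      refine ⟨fun x hx => hB.1 x (Multiset.mem_of_le (Multiset.sub_le_self B A) hx), ?_⟩
      have := congrArg Multiset.sum hBA
      rwa [Multiset.sum_add, hA.1.2, add_zero, hB.2] at this
    have hlt : B - A < B := by
      refine lt_of_le_of_ne (Multiset.sub_le_self B A) fun h => hA.2.1 ?_
      simpa [h] using hBA
    obtain ⟨k, hk⟩ := ih _ hlt hrest
    exact ⟨k + 1, hBA ▸ add_mem_lengthSet hk hA.one_mem_lengthSet⟩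

theorem eq_of_mem_lengthSet_of_deltaSet_eq_empty (hhf : DeltaSet G₀ = ∅) {B : Multiset G}
    (hB : IsZeroSumSeq G₀ B) {a b : ℕ} (ha : a ∈ LengthSet G₀ B) (hb : b ∈ LengthSet G₀ B) :
    a = b := by
  have key : ∀ {x y}, x ∈ LengthSet G₀ B → y ∈ LengthSet G₀ B → ¬x < y := fun hx hy hxy => by
    obtain ⟨c, -, -, -, hdist⟩ := exists_mem_distSet_of_lt hx hy hxy
    exact (Set.eq_empty_iff_forall_notMem.1 hhf) _ ⟨B, hB, hdist⟩
  exact le_antisymm (not_lt.1 (key hb ha)) (not_lt.1 (key ha hb))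

end Lengths

section CrossNumber

variable {G : Type*} [AddCommGroup G]

theorem crossNum_add (S T : Multiset G) : crossNum (S + T) = crossNum S + crossNum T := by
  simp [crossNum]

theorem crossNum_nsmul (n : ℕ) (S : Multiset G) : crossNum (n • S) = n * crossNum S := by
  rw [crossNum, Multiset.map_nsmul, ← nsmul_eq_mul]
  exact map_nsmul Multiset.sumAddMonoidHom n _

theorem crossNum_sum (F : Multiset (Multiset G)) : crossNum F.sum = (F.map crossNum).sum := by
  induction F using Multiset.induction_on with
  | empty => simp [crossNum]
  | cons A F ih => simp [crossNum_add, ih]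

theorem crossNum_replicate_addOrderOf [Finite G] (x : G) :
    crossNum (Multiset.replicate (addOrderOf x) x) = 1 := by
  have : (addOrderOf x : ℚ) ≠ 0 := by exact_mod_cast (addOrderOf_pos x).ne'
  simp [crossNum, this]

theorem crossNum_pos [Finite G] {S : Multiset G} (hS : S ≠ 0) : 0 < crossNum S := by
  have := Multiset.sum_lt_sum_of_nonempty (f := fun _ => (0 : ℚ))
    (g := fun x => 1 / (addOrderOf x : ℚ)) hS fun x _ => by
    have := addOrderOf_pos x
    positivity
  simpa [crossNum] using this

theorem natCast_sum_div_addOrderOf {S : Multiset G} {N : ℕ} (hN : ∀ x ∈ S, addOrderOf x ∣ N) :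
    ((S.map fun x => N / addOrderOf x).sum : ℚ) = N * crossNum S := by
  rw [crossNum, ← Multiset.sum_map_mul_left, Nat.cast_multiset_sum, Multiset.map_map]
  refine congrArg Multiset.sum (Multiset.map_congr rfl fun x hx => ?_)
  rw [Function.comp_apply, Nat.cast_div_charZero (hN x hx), div_eq_mul_one_div]

end CrossNumber

section HalfFactorial

variable {G : Type*} [AddCommGroup G] [Finite G] {G₀ : Set G}

theorem sum_div_addOrderOf_mem_lengthSet_natCard_nsmul {S : Multiset G} (hS : ∀ x ∈ S, x ∈ G₀) :
    (S.map fun x => Nat.card G / addOrderOf x).sum ∈ LengthSet G₀ (Nat.card G • S) := by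
  induction S using Multiset.induction_on with
  | empty => exact ⟨0, rfl, by simp, by simp⟩
  | cons x S ih =>
    have hx : Multiset.replicate (Nat.card G) x
        = (Nat.card G / addOrderOf x) • Multiset.replicate (addOrderOf x) x := by
      rw [Multiset.nsmul_replicate, Nat.div_mul_cancel (addOrderOf_dvd_natCard x)]
    have hlen := mul_mem_lengthSet_nsmul
      (isAtomSeq_replicate_addOrderOf (hS x (Multiset.mem_cons_self x S))).one_mem_lengthSet
      (Nat.card G / addOrderOf x)
    rw [mul_one, ← hx] at hlen
    rw [Multiset.map_cons, Multiset.sum_cons, ← Multiset.singleton_add, nsmul_add,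
      Multiset.nsmul_singleton]
    exact add_mem_lengthSet hlen (ih fun y hy => hS y (Multiset.mem_cons_of_mem hy))

/-- Zaks–Skula. The two lengths compared are those of `A ^ |G|` as a product of copies of `A`
and as a product of the atoms `x ^ ord x`. -/
theorem crossNum_eq_one_of_deltaSet_eq_empty (hhf : DeltaSet G₀ = ∅) {A : Multiset G}
    (hA : IsAtomSeq G₀ A) : crossNum A = 1 := by
  have hN : (Nat.card G : ℚ) ≠ 0 := by exact_mod_cast Nat.card_pos.ne'
  have hlen := eq_of_mem_lengthSet_of_deltaSet_eq_empty hhf (hA.1.nsmul (Nat.card G))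
    (mul_mem_lengthSet_nsmul hA.one_mem_lengthSet (Nat.card G))
    (sum_div_addOrderOf_mem_lengthSet_natCard_nsmul hA.1.1)
  have hcast := congrArg (Nat.cast : ℕ → ℚ) hlen
  rw [natCast_sum_div_addOrderOf fun x _ => addOrderOf_dvd_natCard x, Nat.cast_mul,
    Nat.cast_one, mul_one] at hcast
  exact mul_left_cancel₀ hN (hcast.symm.trans (mul_one _).symm)

theorem natCast_eq_crossNum_of_mem_lengthSet (hhf : DeltaSet G₀ = ∅) {B : Multiset G} {k : ℕ}
    (hk : k ∈ LengthSet G₀ B) : (k : ℚ) = crossNum B := by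
  obtain ⟨F, rfl, hF, rfl⟩ := hk
  rw [crossNum_sum,
    Multiset.map_congr rfl fun A hA => crossNum_eq_one_of_deltaSet_eq_empty hhf (hF A hA)]
  simp

end HalfFactorial

section MinDistance

variable {G : Type*} [AddCommGroup G] {G₀ : Set G}

/-- If `d = min Δ(G₀)` does not divide `e = b - a ∈ Δ(G₀)`, with `b' - a' = d`, then
`B C ^ q` for `q = e / d` has the lengths `a + q b'` and `b + q a'`, at distance `e % d < d`. -/
theorem sInf_deltaSet_dvd {e : ℕ} (he : e ∈ DeltaSet G₀) : sInf (DeltaSet G₀) ∣ e := by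
  set d := sInf (DeltaSet G₀)
  obtain ⟨C, hC, a', b', ha', hb', hab', hd, -⟩ : d ∈ DeltaSet G₀ := Nat.sInf_mem ⟨e, he⟩
  obtain ⟨B, hB, a, b, ha, hb, hab, rfl, -⟩ := he
  rw [Nat.dvd_iff_mod_eq_zero]
  by_contra hr
  set q := (b - a) / d
  have hdiv : d * q + (b - a) % d = b - a := Nat.div_add_mod _ _
  have hmod : (b - a) % d < d := Nat.mod_lt _ (by omega)
  have hqb' : q * b' = q * a' + d * q := by
    rw [show b' = a' + d by omega, Nat.mul_add, Nat.mul_comm q d]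
  obtain ⟨c, -, hac, hcb, hdist⟩ := exists_mem_distSet_of_lt
    (add_mem_lengthSet ha (mul_mem_lengthSet_nsmul hb' q))
    (add_mem_lengthSet hb (mul_mem_lengthSet_nsmul ha' q)) (by omega)
  have : d ≤ c - (a + q * b') := Nat.sInf_le ⟨B + q • C, hB.add (hC.nsmul q), hdist⟩
  omega

theorem sInf_deltaSet_dvd_sub {B : Multiset G} (hB : IsZeroSumSeq G₀ B) {a b : ℕ}
    (ha : a ∈ LengthSet G₀ B) (hb : b ∈ LengthSet G₀ B) : sInf (DeltaSet G₀) ∣ b - a :=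
  dvd_sub_of_forall_mem_distSet_dvd (fun _ he => sInf_deltaSet_dvd ⟨B, hB, he⟩) ha hb

end MinDistance

theorem exists_dvd_add_mul_of_coprime {a u n : ℕ} [NeZero n] (h : u.Coprime n) :
    ∃ t, n ∣ a + t * u := by
  refine ⟨(-(a : ZMod n) * (u : ZMod n)⁻¹).val, ?_⟩
  rw [← ZMod.natCast_eq_zero_iff]
  push_cast
  rw [ZMod.natCast_zmod_val, mul_assoc, mul_comm _ (u : ZMod n), ZMod.coe_mul_inv_eq_one u h]
  ring

section Main

variable {G : Type*} [AddCommGroup G] [Finite G] [DecidableEq G] {G₀ : Set G} {g : G}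

theorem exists_mem_lengthSet_eq_crossNum (hg : g ∈ G₀) (hhf : DeltaSet (G₀ \ {g}) = ∅)
    {W : Multiset G} (hW : IsZeroSumSeq G₀ W) (hdvd : addOrderOf g ∣ W.count g) :
    ∃ k : ℕ, (k : ℚ) = crossNum W ∧ k ∈ LengthSet G₀ W := by
  obtain ⟨s, hs⟩ := hdvd
  have hatom := isAtomSeq_replicate_addOrderOf hg
  set W' := W.filter (· ≠ g)
  have hsplit : W = W' + s • Multiset.replicate (addOrderOf g) g := by
    rw [Multiset.nsmul_replicate, mul_comm, ← hs, ← Multiset.filter_eq', add_comm]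
    exact (Multiset.filter_add_not (· = g) W).symm
  have hW' : IsZeroSumSeq (G₀ \ {g}) W' := by
    refine ⟨fun x hx => ⟨hW.1 x (Multiset.mem_of_mem_filter hx), (Multiset.mem_filter.1 hx).2⟩, ?_⟩
    have := congrArg Multiset.sum hsplit
    rwa [Multiset.sum_add, (hatom.1.nsmul s).2, add_zero, hW.2, eq_comm] at this
  obtain ⟨k, hk⟩ := hW'.lengthSet_nonempty
  have hs_len := mul_mem_lengthSet_nsmul hatom.one_mem_lengthSet s
  rw [mul_one] at hs_len
  refine ⟨k + s, ?_, hsplit ▸ add_mem_lengthSet (lengthSet_mono Set.sdiff_subset _ hk) hs_len⟩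
  rw [hsplit, crossNum_add, crossNum_nsmul, crossNum_replicate_addOrderOf,
    ← natCast_eq_crossNum_of_mem_lengthSet hhf hk]
  push_cast
  ring

theorem IsAtomSeq.exists_lengthSet_crossNum_add {A : Multiset G} (hA : IsAtomSeq G₀ A)
    (hg : g ∈ G₀) (hhf : DeltaSet (G₀ \ {g}) = ∅) {U : Multiset G} (hU : IsAtomSeq G₀ U)
    (hkU : crossNum U = 1) (hgcd : (U.count g).Coprime (addOrderOf g)) :
    ∃ (t k : ℕ) (W : Multiset G), IsZeroSumSeq G₀ W ∧ 1 + t ∈ LengthSet G₀ W ∧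
      k ∈ LengthSet G₀ W ∧ (k : ℚ) = crossNum A + t := by
  have : NeZero (addOrderOf g) := ⟨(addOrderOf_pos g).ne'⟩
  obtain ⟨t, ht⟩ := exists_dvd_add_mul_of_coprime (a := A.count g) hgcd
  have hW : IsZeroSumSeq G₀ (A + t • U) := hA.1.add (hU.1.nsmul t)
  obtain ⟨k, hk, hklen⟩ := exists_mem_lengthSet_eq_crossNum hg hhf hW
    (by rwa [Multiset.count_add, Multiset.count_nsmul])
  have htlen := mul_mem_lengthSet_nsmul hU.one_mem_lengthSet t
  rw [mul_one] at htlen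
  refine ⟨t, k, _, hW, add_mem_lengthSet hA.one_mem_lengthSet htlen, hklen, ?_⟩
  rw [hk, crossNum_add, crossNum_nsmul, hkU, mul_one]

end Main

theorem stmt_10_general {G : Type*} [AddCommGroup G] [Fintype G] [DecidableEq G] (G₀ : Set G)
    (g : G) (hg : g ∈ G₀) (hhf : DeltaSet (G₀ \ {g}) = ∅)
    (U : Multiset G) (hU : IsAtomSeq G₀ U) (hkU : crossNum U = 1)
    (hgcd : Nat.gcd (U.count g) (addOrderOf g) = 1) :
    (∀ A : Multiset G, IsAtomSeq G₀ A → ∃ m : ℕ, crossNum A = m) ∧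
    (∀ A : Multiset G, IsAtomSeq G₀ A → ∀ m : ℕ, crossNum A = (m : ℚ) → 1 < m →
      sInf (DeltaSet G₀) ∣ m - 1) := by
  have key : ∀ A, IsAtomSeq G₀ A → ∃ m : ℕ, crossNum A = m ∧ sInf (DeltaSet G₀) ∣ m - 1 := by
    intro A hA
    obtain ⟨t, k, W, hW, h1, hk, hcross⟩ := hA.exists_lengthSet_crossNum_add hg hhf hU hkU hgcd
    have htk : t < k := by exact_mod_cast (show (t : ℚ) < k by linarith [crossNum_pos hA.2.1])
    refine ⟨k - t, by push_cast [Nat.cast_sub htk.le]; linarith, ?_⟩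
    rw [show k - t - 1 = k - (1 + t) by omega]
    exact sInf_deltaSet_dvd_sub hW h1 hk
  refine ⟨fun A hA => (key A hA).imp fun _ => And.left, fun A hA m hm _ => ?_⟩
  obtain ⟨m', hm', hdvd⟩ := key A hA
  rwa [show m = m' by exact_mod_cast hm.symm.trans hm']

theorem stmt_10 {G : Type*} [AddCommGroup G] [Fintype G] [DecidableEq G] (G₀ : Set G)
    (hnhf : DeltaSet G₀ ≠ ∅)
    (g : G) (hg : g ∈ G₀) (hhf : DeltaSet (G₀ \ {g}) = ∅)
    (U : Multiset G) (hU : IsAtomSeq G₀ U) (hkU : crossNum U = 1)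
    (hgcd : Nat.gcd (U.count g) (addOrderOf g) = 1) :
    (∀ A : Multiset G, IsAtomSeq G₀ A → ∃ m : ℕ, crossNum A = m) ∧
    (∀ A : Multiset G, IsAtomSeq G₀ A → ∀ m : ℕ, crossNum A = (m : ℚ) → 1 < m →
      sInf (DeltaSet G₀) ∣ m - 1) :=
  stmt_10_general G₀ g hg hhf U hU hkU hgcd
end
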